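/- With the weighted-graph and unit potential flow setup below, let θ, φ ∈ (0, π), define S_s(φ) = I − (1 − e^{−iφ})|φ_s⟩⟨φ_s|, S_f(θ) = I − (1 − e^{iθ})|f⟩⟨f|, and the operator U(θ,φ) = S_s(φ)( I − (1 − e^{iθ})(I − Π₊) ) on the edge space. Let ψ = α|φ_s⟩ + β|f⟩ for α, β ∈ ℂ, and let w = α·(1/(R_s √d_s)) Σ_{x ∈ V, x ≠ s} v_x √(d_x) |φ_x⟩. Then U(θ,φ)(ψ + w) = S_s(φ) S_f(θ) ψ + w; in particular, for unit ψ the transduction complexity of this rotation is at most |α|²(ET_s/(R_s d_s) − 1), where ET_s := (1/R_s) Σ_{x∈V} v_x² d_x. -/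

import Mathlib

open scoped InnerProductSpace BigOperators

namespace Elfs

variable {V : Type*} [Fintype V] [DecidableEq V]

/-- The degree of a vertex: `d_x = Σ_y w_{xy}`. -/
noncomputable def deg (w : V → V → ℝ) (x : V) : ℝ := ∑ y, w x y

/-- The basis state `|xy⟩` of the edge space. -/
noncomputable def ket (p : V × V) : EuclideanSpace ℂ (V × V) :=
  EuclideanSpace.single p 1

/-- The star state `|φ_x⟩ = (1/√d_x) Σ_y √(w_{xy}) |xy⟩`. -/
noncomputable def starState (w : V → V → ℝ) (x : V) : EuclideanSpace ℂ (V × V) :=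
  ((Real.sqrt (deg w x) : ℂ))⁻¹ • ∑ y, ((Real.sqrt (w x y) : ℝ) : ℂ) • ket (x, y)

/-- The electric flow state `|f⟩ = (1/√(2 R_s)) Σ_{(x,y)} (f_{xy}/√(w_{xy})) |xy⟩`
for the potential flow `f_{xy} = w_{xy}(v_x − v_y)` (terms with `w_{xy} = 0` contribute `0`,
matching the restriction of the sum to edges of positive weight). -/
noncomputable def flowState (w : V → V → ℝ) (v : V → ℝ) (s : V) :
    EuclideanSpace ℂ (V × V) :=
  ((Real.sqrt (2 * v s) : ℂ))⁻¹ •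
    ∑ p : V × V, ((w p.1 p.2 * (v p.1 - v p.2) / Real.sqrt (w p.1 p.2) : ℝ) : ℂ) • ket p

/-- The symmetric subspace `span{|xy⟩ + |yx⟩ : (x,y) ∈ E}`. -/
noncomputable def symSpan (E : Set (V × V)) : Submodule ℂ (EuclideanSpace ℂ (V × V)) :=
  Submodule.span ℂ {u | ∃ p ∈ E, u = ket p + ket p.swap}

/-- `Π₊`, the orthogonal projection onto the symmetric subspace. -/
noncomputable def projSym (E : Set (V × V)) :
    EuclideanSpace ℂ (V × V) →ₗ[ℂ] EuclideanSpace ℂ (V × V) :=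
  (symSpan E).subtype ∘ₗ (Submodule.orthogonalProjectionOnto (symSpan E)).toLinearMap

end Elfs

namespace Elfs

variable {V : Type*} [Fintype V] [DecidableEq V]

/-- The catalyst `(1/(R_s √d_s)) Σ_{x ≠ s} v_x √(d_x) |φ_x⟩`. -/
noncomputable def catalyst (w : V → V → ℝ) (v : V → ℝ) (s : V) :
    EuclideanSpace ℂ (V × V) :=
  (((v s * Real.sqrt (deg w s) : ℝ) : ℂ))⁻¹ •
    ∑ x ∈ Finset.univ \ {s}, (((v x * Real.sqrt (deg w x) : ℝ)) : ℂ) • starState w x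

/-- The outer product `|u⟩⟨u|` as a linear endomorphism. -/
noncomputable def outer {H : Type*} [NormedAddCommGroup H] [InnerProductSpace ℂ H]
    (u : H) : H →ₗ[ℂ] H :=
  LinearMap.smulRight ((innerSL ℂ u).toLinearMap) u

end Elfs

open Elfs

/-!
Write `P` for the edge vector with coordinates `v_x √w_xy / (R_s √d_s)`. The catalyst carries exactly
the rows `x ≠ s` of `P`, so `|φ_s⟩ + w/α = P`. Subtracting `⟨f|φ_s⟩ |f⟩ = |f⟩ / (√(2R_s) √d_s)` from `P`
leaves the vector `√w_xy (v_x + v_y) / (2 R_s √d_s)`, which is symmetric and supported on `E`, while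
`|f⟩` is antisymmetric. Since `⟨f|f⟩ = 1` (the energy of the unit potential flow is `R_s`), this gives
`(I − Π₊)(ψ + w) = ⟨f|ψ⟩ |f⟩`: on `ψ + w` the reflection about `Π₊` acts as `S_f(θ)` acts on `ψ`.
Finally `S_s(φ)` fixes `w`, whose support avoids the star of `s`, and `‖w‖²` is computed exactly.
-/

namespace Elfs

section

variable {ι : Type*} [Fintype ι]

lemma inner_eq_ofReal_sum {x y : EuclideanSpace ℂ ι} {a b : ι → ℝ}
    (hx : ∀ i, x i = a i) (hy : ∀ i, y i = b i) :
    ⟪x, y⟫_ℂ = ((∑ i, a i * b i : ℝ) : ℂ) := by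
  simp [PiLp.inner_apply, hx, hy, mul_comm]

lemma norm_sq_eq_sum {x : EuclideanSpace ℂ ι} {a : ι → ℝ}
    (hx : ∀ i, x i = a i) : ‖x‖ ^ 2 = ∑ i, a i ^ 2 := by
  simp [EuclideanSpace.norm_sq_eq, hx]

end

section

variable {V : Type*} [Fintype V]

lemma sum_sum_mul_sub_sq {w : V → V → ℝ} (hwsymm : ∀ x y, w x y = w y x) (v : V → ℝ) :
    ∑ x, ∑ y, w x y * (v x - v y) ^ 2 = 2 * ∑ x, v x * ∑ y, w x y * (v x - v y) := by
  have hswap : ∑ x, ∑ y, w x y * (v x - v y) * v y = -∑ x, ∑ y, w x y * (v x - v y) * v x := by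
    rw [Finset.sum_comm, ← Finset.sum_neg_distrib]
    exact Finset.sum_congr rfl fun x _ => by
      rw [← Finset.sum_neg_distrib]
      exact Finset.sum_congr rfl fun y _ => by rw [hwsymm]; ring
  calc ∑ x, ∑ y, w x y * (v x - v y) ^ 2
      = ∑ x, ∑ y, w x y * (v x - v y) * v x - ∑ x, ∑ y, w x y * (v x - v y) * v y := by
        simp only [← Finset.sum_sub_distrib]; ring_nf
    _ = 2 * ∑ x, ∑ y, w x y * (v x - v y) * v x := by rw [hswap]; ring
    _ = 2 * ∑ x, v x * ∑ y, w x y * (v x - v y) := by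
        congr 1
        refine Finset.sum_congr rfl fun x _ => ?_
        rw [Finset.mul_sum]
        exact Finset.sum_congr rfl fun y _ => by ring

lemma sum_mul_outflow_eq {w : V → V → ℝ} {v : V → ℝ} {s : V} {M : Finset V}
    (hvM : ∀ y ∈ M, v y = 0) (hunit : ∑ y, w s y * (v s - v y) = 1)
    (hcons : ∀ x, x ≠ s → x ∉ M → ∑ y, w x y * (v x - v y) = 0) :
    ∑ x, v x * ∑ y, w x y * (v x - v y) = v s := by
  rw [Finset.sum_eq_single s, hunit, mul_one]
  · intro x _ hxs
    by_cases hxM : x ∈ M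
    · rw [hvM x hxM, zero_mul]
    · rw [hcons x hxs hxM, mul_zero]
  · simp

end

variable {V : Type*} [Fintype V] [DecidableEq V]

lemma starState_apply (w : V → V → ℝ) (x : V) (q : V × V) :
    starState w x q = ((if q.1 = x then √(w x q.2) / √(deg w x) else 0 : ℝ) : ℂ) := by
  obtain ⟨a, b⟩ := q
  by_cases h : a = x
  · subst h
    simp [starState, ket, Pi.single_apply, div_eq_inv_mul]
  · simp [starState, ket, h]

lemma flowState_apply (w : V → V → ℝ) (v : V → ℝ) (s : V) (q : V × V) :
    flowState w v s q = ((√(w q.1 q.2) * (v q.1 - v q.2) / √(2 * v s) : ℝ) : ℂ) := by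
  have h : w q.1 q.2 * (v q.1 - v q.2) / √(w q.1 q.2) = √(w q.1 q.2) * (v q.1 - v q.2) := by
    rw [mul_comm, mul_div_assoc, Real.div_sqrt, mul_comm]
  simp only [flowState, ket, PiLp.smul_apply, WithLp.ofLp_sum, Finset.sum_apply, smul_eq_mul,
    PiLp.single_apply, mul_ite, mul_one, mul_zero, Finset.sum_ite_eq, Finset.mem_univ, if_true, h]
  push_cast
  ring

lemma catalyst_apply {w : V → V → ℝ} (hdeg : ∀ x, 0 < deg w x) (v : V → ℝ) (s : V)
    (q : V × V) :
    catalyst w v s q =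
      ((if q.1 = s then 0 else v q.1 * √(w q.1 q.2) / (v s * √(deg w s)) : ℝ) : ℂ) := by
  simp only [catalyst, PiLp.smul_apply, WithLp.ofLp_sum, Finset.sum_apply, smul_eq_mul,
    starState_apply]
  norm_cast
  have hd : √(deg w q.1) ≠ 0 := (Real.sqrt_pos.2 (hdeg q.1)).ne'
  simp only [mul_ite, mul_zero, Finset.sum_ite_eq, Finset.mem_sdiff, Finset.mem_univ,
    Finset.mem_singleton, true_and]
  split_ifs <;> field_simp

lemma sum_smul_ket (u : EuclideanSpace ℂ (V × V)) : ∑ p, u p • ket p = u := by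
  ext q
  simp [ket, Pi.single_apply]

lemma mem_symSpan_of_symm {E : Set (V × V)} {u : EuclideanSpace ℂ (V × V)}
    (hsymm : ∀ q, u q.swap = u q) (hsupp : ∀ q ∉ E, u q = 0) : u ∈ symSpan E := by
  have hswap : ∑ p, u p • ket p.swap = u := by
    calc ∑ p, u p • ket p.swap = ∑ p, u p • ket p :=
          Fintype.sum_equiv (Equiv.prodComm V V) _ _ fun p => by simp [hsymm]
      _ = u := sum_smul_ket u
  have h2 : u = (2 : ℂ)⁻¹ • ∑ p, u p • (ket p + ket p.swap) := by
    simp only [smul_add, Finset.sum_add_distrib, sum_smul_ket, hswap]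
    rw [← add_smul]
    norm_num
  rw [h2]
  refine Submodule.smul_mem _ _ (Submodule.sum_mem _ fun p _ => ?_)
  by_cases hp : p ∈ E
  · exact Submodule.smul_mem _ _ (Submodule.subset_span ⟨p, hp, rfl⟩)
  · simp [hsupp p hp]

lemma mem_orthogonal_symSpan_of_antisymm (E : Set (V × V)) {u : EuclideanSpace ℂ (V × V)}
    (hanti : ∀ q, u q.swap = -u q) : u ∈ (symSpan E)ᗮ := by
  refine (Submodule.mem_orthogonal' _ _).2 fun x hx => ?_
  induction hx using Submodule.span_induction with
  | mem x hx =>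
    obtain ⟨p, -, rfl⟩ := hx
    simp [inner_add_right, ket, EuclideanSpace.inner_single_right, hanti]
  | zero => simp
  | add x y _ _ hx hy => rw [inner_add_right, hx, hy, add_zero]
  | smul c x _ hx => rw [inner_smul_right, hx, mul_zero]

lemma projSym_add_of_symm_of_antisymm {E : Set (V × V)} {a b : EuclideanSpace ℂ (V × V)}
    (hsymm : ∀ q, a q.swap = a q) (hsupp : ∀ q ∉ E, a q = 0) (hanti : ∀ q, b q.swap = -b q) :
    projSym E (a + b) = a :=
  Submodule.eq_starProjection_of_mem_orthogonal' (mem_symSpan_of_symm hsymm hsupp)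
    (mem_orthogonal_symSpan_of_antisymm E hanti) rfl

lemma inner_flowState_starState {w : V → V → ℝ} (hw0 : ∀ x y, 0 ≤ w x y) {v : V → ℝ} {s : V}
    (hunit : ∑ y, w s y * (v s - v y) = 1) :
    ⟪flowState w v s, starState w s⟫_ℂ = (((√(2 * v s) * √(deg w s))⁻¹ : ℝ) : ℂ) := by
  rw [inner_eq_ofReal_sum (flowState_apply w v s) (starState_apply w s), Fintype.sum_prod_type]
  congr 1
  simp only [mul_ite, mul_zero, Finset.sum_ite_irrel, Finset.sum_const_zero, Finset.sum_ite_eq',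
    Finset.mem_univ, if_true]
  calc ∑ y, √(w s y) * (v s - v y) / √(2 * v s) * (√(w s y) / √(deg w s))
      = (√(2 * v s) * √(deg w s))⁻¹ * ∑ y, w s y * (v s - v y) := by
        rw [Finset.mul_sum]
        refine Finset.sum_congr rfl fun y _ => ?_
        linear_combination (v s - v y) / (√(2 * v s) * √(deg w s)) * Real.mul_self_sqrt (hw0 s y)
    _ = _ := by rw [hunit, mul_one]

lemma inner_flowState_self {w : V → V → ℝ} (hw0 : ∀ x y, 0 ≤ w x y)
    (hwsymm : ∀ x y, w x y = w y x) {v : V → ℝ} {s : V} {M : Finset V}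
    (hvM : ∀ y ∈ M, v y = 0) (hRpos : 0 < v s) (hunit : ∑ y, w s y * (v s - v y) = 1)
    (hcons : ∀ x, x ≠ s → x ∉ M → ∑ y, w x y * (v x - v y) = 0) :
    ⟪flowState w v s, flowState w v s⟫_ℂ = 1 := by
  rw [inner_eq_ofReal_sum (flowState_apply w v s) (flowState_apply w v s),
    Fintype.sum_prod_type, Complex.ofReal_eq_one]
  have h2R : √(2 * v s) * √(2 * v s) = 2 * v s := Real.mul_self_sqrt (by positivity)
  calc ∑ x, ∑ y, √(w x y) * (v x - v y) / √(2 * v s) * (√(w x y) * (v x - v y) / √(2 * v s))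
      = (2 * v s)⁻¹ * ∑ x, ∑ y, w x y * (v x - v y) ^ 2 := by
        simp only [Finset.mul_sum]
        refine Finset.sum_congr rfl fun x _ => Finset.sum_congr rfl fun y _ => ?_
        rw [div_mul_div_comm, h2R]
        linear_combination (v x - v y) ^ 2 / (2 * v s) * Real.mul_self_sqrt (hw0 x y)
    _ = 1 := by
        rw [sum_sum_mul_sub_sq hwsymm, sum_mul_outflow_eq hvM hunit hcons]
        field_simp

lemma outer_apply {H : Type*} [NormedAddCommGroup H] [InnerProductSpace ℂ H] (u x : H) :
    outer u x = ⟪u, x⟫_ℂ • u := rfl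

lemma outer_starState_catalyst {w : V → V → ℝ} (hdeg : ∀ x, 0 < deg w x) (v : V → ℝ) (s : V) :
    outer (starState w s) (catalyst w v s) = 0 := by
  rw [outer_apply, inner_eq_ofReal_sum (starState_apply w s) (catalyst_apply hdeg v s),
    Finset.sum_eq_zero fun q _ => ?_, Complex.ofReal_zero, zero_smul]
  split_ifs <;> simp

lemma starState_add_catalyst_sub_flowState_apply {w : V → V → ℝ} (hdeg : ∀ x, 0 < deg w x)
    {v : V → ℝ} {s : V} (hRpos : 0 < v s) (q : V × V) :
    (starState w s + catalyst w v s - (((√(2 * v s) * √(deg w s))⁻¹ : ℝ) : ℂ) • flowState w v s) q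
      = ((√(w q.1 q.2) * (v q.1 + v q.2) / (2 * v s * √(deg w s)) : ℝ) : ℂ) := by
  simp only [PiLp.add_apply, PiLp.sub_apply, PiLp.smul_apply, starState_apply, catalyst_apply hdeg,
    flowState_apply, smul_eq_mul]
  norm_cast
  have hd : √(deg w s) ≠ 0 := (Real.sqrt_pos.2 (hdeg s)).ne'
  have hc : ∀ t, (√(2 * v s) * √(deg w s))⁻¹ * (t / √(2 * v s)) = t / (2 * v s * √(deg w s)) := by
    intro t
    rw [mul_comm, ← div_eq_mul_inv, div_div, ← mul_assoc, Real.mul_self_sqrt (by positivity)]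
  rw [hc]
  split_ifs with h
  · rw [h]
    field_simp
    ring
  · field_simp
    ring

lemma sub_projSym_eq_outer_flowState {E : Set (V × V)} {w : V → V → ℝ} (hw0 : ∀ x y, 0 ≤ w x y)
    (hwsymm : ∀ x y, w x y = w y x) (hwE : ∀ x y, (x, y) ∉ E → w x y = 0)
    (hdeg : ∀ x, 0 < deg w x) {v : V → ℝ} {s : V} {M : Finset V}
    (hvM : ∀ y ∈ M, v y = 0) (hRpos : 0 < v s) (hunit : ∑ y, w s y * (v s - v y) = 1)
    (hcons : ∀ x, x ≠ s → x ∉ M → ∑ y, w x y * (v x - v y) = 0) {α β : ℂ}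
    {ψ : EuclideanSpace ℂ (V × V)} (hψ : ψ = α • starState w s + β • flowState w v s) :
    ψ + α • catalyst w v s - projSym E (ψ + α • catalyst w v s) = outer (flowState w v s) ψ := by
  subst hψ
  set c : ℂ := (((√(2 * v s) * √(deg w s))⁻¹ : ℝ) : ℂ)
  set G := starState w s + catalyst w v s - c • flowState w v s with hG
  have hGq : ∀ q, G q = ((√(w q.1 q.2) * (v q.1 + v q.2) / (2 * v s * √(deg w s)) : ℝ) : ℂ) :=
    starState_add_catalyst_sub_flowState_apply hdeg hRpos
  have hdecomp : α • starState w s + β • flowState w v s + α • catalyst w v s =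
      α • G + (α * c + β) • flowState w v s := by
    rw [hG]; module
  have hproj : projSym E (α • G + (α * c + β) • flowState w v s) = α • G := by
    refine projSym_add_of_symm_of_antisymm (fun q => ?_) (fun q hq => ?_) (fun q => ?_)
    · simp [hGq, hwsymm q.2, add_comm]
    · simp [hGq, hwE q.1 q.2 hq]
    · simp only [PiLp.smul_apply, flowState_apply, Prod.fst_swap, Prod.snd_swap, hwsymm q.2]
      push_cast
      ring
  have hinner : ⟪flowState w v s, α • starState w s + β • flowState w v s⟫_ℂ = α * c + β := by
    rw [inner_add_right, inner_smul_right, inner_smul_right, inner_flowState_starState hw0 hunit,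
      inner_flowState_self hw0 hwsymm hvM hRpos hunit hcons, mul_one]
  rw [hdecomp, hproj, outer_apply, hinner, add_sub_cancel_left]

lemma norm_catalyst_sq {w : V → V → ℝ} (hw0 : ∀ x y, 0 ≤ w x y) (hdeg : ∀ x, 0 < deg w x)
    {v : V → ℝ} {s : V} (hRpos : 0 < v s) :
    ‖catalyst w v s‖ ^ 2 = ((v s)⁻¹ * ∑ x, v x ^ 2 * deg w x) / (v s * deg w s) - 1 := by
  have hd := hdeg s
  have hoff : ∀ x, (if x = s then 0 else v x ^ 2 * deg w x) =
      v x ^ 2 * deg w x - if x = s then v x ^ 2 * deg w x else 0 := by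
    intro x; split_ifs <;> simp
  calc ‖catalyst w v s‖ ^ 2
      = ∑ x, ∑ y, (if x = s then 0 else v x * √(w x y) / (v s * √(deg w s))) ^ 2 := by
        rw [norm_sq_eq_sum (catalyst_apply hdeg v s), Fintype.sum_prod_type]
    _ = (∑ x, if x = s then 0 else v x ^ 2 * deg w x) / (v s ^ 2 * deg w s) := by
        rw [Finset.sum_div]
        refine Finset.sum_congr rfl fun x _ => ?_
        split_ifs
        · simp
        · simp only [div_pow, mul_pow, Real.sq_sqrt (hw0 x _), Real.sq_sqrt hd.le, ← Finset.sum_div,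
            ← Finset.mul_sum]
          rfl
    _ = ((v s)⁻¹ * ∑ x, v x ^ 2 * deg w x) / (v s * deg w s) - 1 := by
        rw [Finset.sum_congr rfl fun x _ => hoff x, Finset.sum_sub_distrib, Finset.sum_ite_eq']
        field_simp
        simp

end Elfs

theorem stmt9 {V : Type*} [Fintype V] [DecidableEq V]
    (E : Set (V × V)) (w : V → V → ℝ) (s : V) (M : Finset V)
    (hw0 : ∀ x y, 0 ≤ w x y) (hwsymm : ∀ x y, w x y = w y x)
    (hwE : ∀ x y, (x, y) ∉ E → w x y = 0)
    (hdeg : ∀ x, 0 < deg w x)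
    (v : V → ℝ) (hvM : ∀ y ∈ M, v y = 0) (hRpos : 0 < v s)
    (hunit : ∑ y, w s y * (v s - v y) = 1)
    (hcons : ∀ x, x ≠ s → x ∉ M → ∑ y, w x y * (v x - v y) = 0)
    (θ φ' : ℝ)
    (Ss Sf Uop : EuclideanSpace ℂ (V × V) →ₗ[ℂ] EuclideanSpace ℂ (V × V))
    (hSs : Ss = LinearMap.id -
        (1 - Complex.exp (-(φ' : ℂ) * Complex.I)) • outer (starState w s))
    (hSf : Sf = LinearMap.id -
        (1 - Complex.exp ((θ : ℂ) * Complex.I)) • outer (flowState w v s))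
    (hUop : Uop = Ss ∘ₗ (LinearMap.id -
        (1 - Complex.exp ((θ : ℂ) * Complex.I)) • (LinearMap.id - projSym E)))
    (α β : ℂ) (ψ wc : EuclideanSpace ℂ (V × V))
    (hψ : ψ = α • starState w s + β • flowState w v s)
    (hwc : wc = α • catalyst w v s) :
    Uop (ψ + wc) = (Ss ∘ₗ Sf) ψ + wc ∧
    (‖ψ‖ = 1 → ‖wc‖ ^ 2 ≤
      ‖α‖ ^ 2 * (((v s)⁻¹ * ∑ x, v x ^ 2 * deg w x) / (v s * deg w s) - 1)) := by
  have hreflect : ψ + wc - projSym E (ψ + wc) = outer (flowState w v s) ψ := by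
    rw [hwc]; exact sub_projSym_eq_outer_flowState hw0 hwsymm hwE hdeg hvM hRpos hunit hcons hψ
  have hSs_wc : Ss wc = wc := by
    simp only [hSs, hwc, LinearMap.sub_apply, LinearMap.smul_apply, LinearMap.id_apply, map_smul,
      outer_starState_catalyst hdeg, smul_zero, sub_zero]
  refine ⟨?_, fun _ => ?_⟩
  · simp only [hUop, hSf, LinearMap.comp_apply, LinearMap.sub_apply, LinearMap.smul_apply,
      LinearMap.id_apply, hreflect]
    rw [add_sub_right_comm, map_add, hSs_wc]
  · rw [hwc, norm_smul, mul_pow, norm_catalyst_sq hw0 hdeg hRpos]
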